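/- arXiv:2403.12549 — 3 statements merged into one kernel-verified Lean document; each statement's English description precedes it below -/
import Mathlib

section
/- There exists a constant c₂ > 0, not depending on t or q, such that for all positive integers t and q with q ≥ 2 there exists N such that for every n ≥ N, tw(H(t,q,n)) ≤ pw(H(t,q,n)) ≤ c₂·t·qⁿ/√n. -/
/-- A tree decomposition of a graph `G` over a tree `T`: bags cover all vertices and all
edges, and for each vertex the set of nodes whose bags contain it induces a connected
(hence subtree) part of `T`. -/
structure TreeDecomp {V : Type*} {ι : Type} (G : SimpleGraph V) (T : SimpleGraph ι) where
  bag : ι → Finset V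
  cover : ∀ v : V, ∃ i, v ∈ bag i
  edgeCover : ∀ u v : V, G.Adj u v → ∃ i, u ∈ bag i ∧ v ∈ bag i
  subtree : ∀ v : V, (T.induce {i : ι | v ∈ bag i}).Connected

/-- The treewidth of a finite graph: the minimum over all tree decompositions of
(maximum bag size − 1). -/
noncomputable def treewidth {V : Type*} [Fintype V] (G : SimpleGraph V) : ℕ :=
  sInf { w : ℕ | ∃ (ι : Type) (_ : Fintype ι) (T : SimpleGraph ι),
    T.IsTree ∧ ∃ D : TreeDecomp G T,
      (Finset.univ.sup fun i => (D.bag i).card) - 1 = w }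

/-- A path decomposition of `G` with bags indexed by `Fin m` along a path: for each
vertex, the set of indices of bags containing it is an interval. -/
structure PathDecomp {V : Type*} (G : SimpleGraph V) (m : ℕ) where
  bag : Fin m → Finset V
  cover : ∀ v : V, ∃ i, v ∈ bag i
  edgeCover : ∀ u v : V, G.Adj u v → ∃ i, u ∈ bag i ∧ v ∈ bag i
  interval : ∀ (v : V) (i j k : Fin m), i ≤ j → j ≤ k → v ∈ bag i → v ∈ bag k → v ∈ bag j

/-- The pathwidth of a finite graph: the minimum over all path decompositions of
(maximum bag size − 1). -/
noncomputable def pathwidth {V : Type*} [Fintype V] (G : SimpleGraph V) : ℕ :=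
  sInf { w : ℕ | ∃ (m : ℕ) (D : PathDecomp G m),
    (Finset.univ.sup fun i => (D.bag i).card) - 1 = w }

/-- The bandwidth of a finite graph: the minimum over all bijective numberings of the
vertices of the maximum stretch `|φ u − φ v|` over edges `uv`. -/
noncomputable def bandwidth {V : Type*} [Fintype V] (G : SimpleGraph V) : ℕ :=
  sInf { b : ℕ | ∃ φ : V ≃ Fin (Fintype.card V),
    ∀ u v : V, G.Adj u v → ((φ u : ℤ) - (φ v : ℤ)).natAbs ≤ b }

/-- The generalized Hamming graph `H(t,q,n)`: vertices are `n`-tuples over an alphabet of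
size `q`, two tuples adjacent iff they are distinct with Hamming distance at most `t`. -/
def genHamming (t q n : ℕ) : SimpleGraph (Fin n → Fin q) where
  Adj x y := x ≠ y ∧ hammingDist x y ≤ t
  symm := by
    constructor
    rintro x y ⟨h1, h2⟩
    exact ⟨h1.symm, by rwa [hammingDist_comm]⟩
  loopless := by constructor; rintro x ⟨h, -⟩; exact h rfl

/-!
Weigh a word `x ∈ [q]ⁿ` by the number of its letters in the lower half `{0, …, ⌊q/2⌋ - 1}` of the
alphabet. Words at Hamming distance at most `t` have weights at most `t` apart, so the sets of
words of weight in `[i, i + t]` form a path decomposition whose bags are unions of `t + 1` weight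
classes. With `a = ⌊q/2⌋` and `r = q mod 2`, the class of weight `w` has
`C(n,w) aʷ (a+r)ⁿ⁻ʷ = ∑ⱼ C(n,j) rʲ aⁿ⁻ʲ C(n-j,w)` elements. Bounding `C(k,w) ≤ 2ᵏ/√(k+1)` and
using `C(n,j) (n+1)/(n-j+1) = C(n+1,j)` shows that it is `O(qⁿ/√n)`.
-/

open Finset SimpleGraph

section PathDecomposition

variable {V : Type*} {G : SimpleGraph V}

theorem card_edgeSet_pathGraph (m : ℕ) : Nat.card (pathGraph (m + 1)).edgeSet = m := by
  refine (Nat.card_eq_of_bijective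
    (fun i : Fin m => ⟨s(i.castSucc, i.succ), by simp [pathGraph_adj]⟩)
    ⟨fun i j hij => ?_, ?_⟩).symm.trans (Nat.card_fin m)
  · simp only [Subtype.mk.injEq, Sym2.eq_iff, Fin.ext_iff, Fin.val_castSucc, Fin.val_succ] at hij
    exact Fin.ext (by omega)
  · rintro ⟨e, he⟩
    induction e using Sym2.ind with | h u v => ?_
    have hu := u.isLt
    have hv := v.isLt
    rcases pathGraph_adj.mp he with h | h <;> dsimp only at h
    · exact ⟨⟨u, by omega⟩, Subtype.ext (Sym2.eq_iff.mpr (Or.inl ⟨rfl, Fin.ext h⟩))⟩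
    · exact ⟨⟨v, by omega⟩, Subtype.ext (Sym2.eq_iff.mpr (Or.inr ⟨rfl, Fin.ext h⟩))⟩

theorem isTree_pathGraph (m : ℕ) : (pathGraph (m + 1)).IsTree := by
  rw [isTree_iff_connected_and_card, card_edgeSet_pathGraph, Nat.card_fin]
  exact ⟨pathGraph_connected m, rfl⟩

theorem pathGraph_induce_preconnected {m : ℕ} (s : Set (Fin m)) [hs : s.OrdConnected] :
    ((pathGraph m).induce s).Preconnected := by
  have hcov : ∀ a b : s, (a : Fin m) ⋖ b ↔ a ⋖ b := fun _ _ =>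
    Set.OrdConnected.apply_covBy_apply_iff (OrderEmbedding.subtype (· ∈ s)) (by simpa using hs)
  have hasse_eq : (pathGraph m).induce s = hasse s := by
    ext a b
    simp [pathGraph, hasse_adj, hcov]
  rw [hasse_eq]
  exact hasse_preconnected_of_succ s

def PathDecomp.toTreeDecomp {m : ℕ} (D : PathDecomp G m) : TreeDecomp G (pathGraph m) where
  bag := D.bag
  cover := D.cover
  edgeCover := D.edgeCover
  subtree v := by
    have : Set.OrdConnected {i | v ∈ D.bag i} :=
      ⟨fun i hi k hk j hj => D.interval v i j k hj.1 hj.2 hi hk⟩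
    obtain ⟨i, hi⟩ := D.cover v
    have : Nonempty {i | v ∈ D.bag i} := ⟨⟨i, hi⟩⟩
    exact ⟨pathGraph_induce_preconnected _⟩

theorem PathDecomp.pathwidth_le [Fintype V] {m : ℕ} (D : PathDecomp G m) :
    pathwidth G ≤ (univ.sup fun i => #(D.bag i)) - 1 :=
  Nat.sInf_le ⟨m, D, rfl⟩

theorem treewidth_le_pathwidth [Fintype V] [Nonempty V] : treewidth G ≤ pathwidth G := by
  have hne : { w : ℕ | ∃ (m : ℕ) (D : PathDecomp G m),
      (univ.sup fun i => #(D.bag i)) - 1 = w }.Nonempty :=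
    ⟨_, 1, ⟨fun _ => univ, fun v => ⟨0, mem_univ v⟩, fun u v _ => ⟨0, mem_univ u, mem_univ v⟩,
      fun v _ _ _ _ _ _ _ => mem_univ v⟩, rfl⟩
  obtain ⟨m, D, hD⟩ := Nat.sInf_mem hne
  obtain ⟨i, -⟩ := D.cover (Classical.arbitrary V)
  obtain ⟨m, rfl⟩ := Nat.exists_eq_add_one_of_ne_zero i.pos.ne'
  exact Nat.sInf_le ⟨Fin (m + 1), inferInstance, pathGraph (m + 1), isTree_pathGraph m,
    D.toTreeDecomp, hD⟩

def PathDecomp.ofLevels [Fintype V] (f : V → ℕ) (d : ℕ)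
    (hf : ∀ u v, G.Adj u v → f u ≤ f v + d) : PathDecomp G (univ.sup f + 1) where
  bag i := {v | (i : ℕ) ≤ f v ∧ f v ≤ i + d}
  cover v := ⟨⟨f v, Nat.lt_succ_of_le (le_sup (mem_univ v))⟩, by simp⟩
  edgeCover u v huv := by
    have := hf u v huv
    have := hf v u huv.symm
    refine ⟨⟨min (f u) (f v), Nat.lt_succ_of_le ((min_le_left _ _).trans (le_sup (mem_univ u)))⟩,
      ?_, ?_⟩ <;> simp <;> omega
  interval v i j k hij hjk hi hk := by
    simp only [mem_filter, mem_univ, true_and, Fin.le_def] at *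
    omega

theorem pathwidth_le_mul_of_adj_le [Fintype V] (f : V → ℕ) (d : ℕ)
    (hf : ∀ u v, G.Adj u v → f u ≤ f v + d) (M : ℝ) (hM : ∀ w, (#{v | f v = w} : ℝ) ≤ M) :
    (pathwidth G : ℝ) ≤ (d + 1) * M := by
  classical
  set D := PathDecomp.ofLevels f d hf
  obtain ⟨i, -, hi⟩ := exists_mem_eq_sup univ univ_nonempty fun i => #(D.bag i)
  have hbag : D.bag i ⊆ (Icc (i : ℕ) (i + d)).biUnion fun w => {v | f v = w} := by
    intro v hv
    simp only [D, PathDecomp.ofLevels, mem_filter, mem_univ, true_and] at hv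
    simpa using hv
  calc (pathwidth G : ℝ) ≤ #(D.bag i) := by
        exact_mod_cast hi ▸ D.pathwidth_le.trans (Nat.sub_le _ 1)
    _ ≤ ∑ w ∈ Icc (i : ℕ) (i + d), (#{v | f v = w} : ℝ) := by
        exact_mod_cast (card_le_card hbag).trans card_biUnion_le
    _ ≤ ∑ _w ∈ Icc (i : ℕ) (i + d), M := sum_le_sum fun w _ => hM w
    _ = (d + 1) * M := by simp [show (i : ℕ) + d + 1 - i = d + 1 by omega]

end PathDecomposition

theorem card_filter_le_card_filter_add_hammingDist {ι α : Type*} [Fintype ι] [DecidableEq α]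
    (P : α → Prop) [DecidablePred P] (x y : ι → α) :
    #{i | P (x i)} ≤ #{i | P (y i)} + hammingDist x y := by
  classical
  calc #{i | P (x i)} ≤ #(({i | P (y i)} : Finset ι) ∪ ({i | x i ≠ y i} : Finset ι)) := by
        refine card_le_card fun i hi => ?_
        by_cases h : x i = y i <;> simp_all
    _ ≤ _ := card_union_le _ _

theorem card_filter_card_filter_eq {ι α : Type*} [Fintype ι] [DecidableEq ι] [Fintype α]
    (P : α → Prop) [DecidablePred P] (w : ℕ) :
    #{x : ι → α | #{i | P (x i)} = w} =
      (Fintype.card ι).choose w * #{a | P a} ^ w * #{a | ¬P a} ^ (Fintype.card ι - w) := by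
  have hmaps : Set.MapsTo (fun x : ι → α => ({i | P (x i)} : Finset ι))
      ({x | #{i | P (x i)} = w} : Finset (ι → α)) (powersetCard w (univ : Finset ι) : Set _) := by
    intro x hx
    simpa using hx
  rw [card_eq_sum_card_fiberwise hmaps]
  have hfiber : ∀ S ∈ powersetCard w (univ : Finset ι),
      #{x ∈ ({x | #{i | P (x i)} = w} : Finset (ι → α)) | ({i | P (x i)} : Finset ι) = S} =
        #{a | P a} ^ w * #{a | ¬P a} ^ (Fintype.card ι - w) := by
    intro S hS
    rw [mem_powersetCard] at hS
    have hpi : {x ∈ ({x | #{i | P (x i)} = w} : Finset (ι → α)) |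
        ({i | P (x i)} : Finset ι) = S} = Fintype.piFinset fun i => {a | P a ↔ i ∈ S} := by
      ext x
      simp only [mem_filter, mem_univ, true_and, Fintype.mem_piFinset, Finset.ext_iff]
      refine ⟨fun h => h.2, fun h => ⟨?_, h⟩⟩
      rw [← hS.2]
      congr 1
      ext i
      simp [h i]
    have hcard : ∀ i, #{a | P a ↔ i ∈ S} = if i ∈ S then #{a | P a} else #{a | ¬P a} := by
      intro i
      split_ifs with h <;> simp [h]
    rw [hpi, Fintype.card_piFinset, Fintype.prod_congr _ _ hcard, prod_ite, prod_const, prod_const,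
      filter_not (· ∈ S) univ, ← compl_eq_univ_sdiff, card_compl, filter_mem_eq_inter, univ_inter,
      hS.2]
  rw [sum_congr rfl hfiber, sum_const, card_powersetCard, card_univ, smul_eq_mul, mul_assoc]

theorem choose_mul_pow_mul_add_pow_eq_sum (n w a r : ℕ) :
    n.choose w * a ^ w * (a + r) ^ (n - w) =
      ∑ j ∈ range (n + 1), n.choose j * r ^ j * a ^ (n - j) * (n - j).choose w := by
  rcases lt_or_ge n w with hnw | hwn
  · rw [Nat.choose_eq_zero_of_lt hnw, zero_mul, zero_mul]
    refine (sum_eq_zero fun j _ => ?_).symm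
    rw [Nat.choose_eq_zero_of_lt (n := n - j) (by omega), mul_zero]
  obtain ⟨m, rfl⟩ := Nat.exists_eq_add_of_le hwn
  have hsub : range (m + 1) ⊆ range (w + m + 1) := range_subset_range.mpr (by omega)
  rw [Nat.add_sub_cancel_left, add_comm a r, add_pow, mul_sum]
  refine (sum_congr rfl fun j hj => ?_).trans (sum_subset hsub fun j hj hj' => ?_)
  · rw [mem_range] at hj
    have hchoose : (w + m).choose j * (w + (m - j)).choose w = (w + m).choose w * m.choose j := by
      have h := Nat.choose_mul (n := w + m) (k := w + m - j) (s := w) (by omega)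
      rwa [Nat.choose_symm (by omega), show w + m - j - w = m - j by omega,
        Nat.add_sub_cancel_left, Nat.choose_symm (by omega), show w + m - j = w + (m - j) by omega]
        at h
    rw [Nat.cast_id, show w + m - j = w + (m - j) by omega, pow_add]
    calc (w + m).choose w * a ^ w * (r ^ j * a ^ (m - j) * m.choose j)
        = (w + m).choose w * m.choose j * (r ^ j * (a ^ w * a ^ (m - j))) := by ring
      _ = _ := by rw [← hchoose]; ring
  · simp only [mem_range] at hj hj'
    rw [Nat.choose_eq_zero_of_lt (n := w + m - j) (by omega), mul_zero]

theorem centralBinom_sq_mul_le (m : ℕ) : m.centralBinom ^ 2 * (3 * m + 1) ≤ 16 ^ m := by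
  induction m with
  | zero => simp
  | succ m ih =>
    have hpos : 0 < (m + 1) ^ 2 * (3 * m + 1) := by positivity
    refine Nat.le_of_mul_le_mul_left ?_ hpos
    calc (m + 1) ^ 2 * (3 * m + 1) * ((m + 1).centralBinom ^ 2 * (3 * (m + 1) + 1))
        = ((m + 1) * (m + 1).centralBinom) ^ 2 * ((3 * m + 4) * (3 * m + 1)) := by ring
      _ = (4 * (2 * m + 1) ^ 2 * (3 * m + 4)) * (m.centralBinom ^ 2 * (3 * m + 1)) := by
          rw [Nat.succ_mul_centralBinom_succ]; ring
      _ ≤ (16 * ((m + 1) ^ 2 * (3 * m + 1))) * 16 ^ m := Nat.mul_le_mul (by nlinarith) ih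
      _ = (m + 1) ^ 2 * (3 * m + 1) * 16 ^ (m + 1) := by ring

theorem choose_half_sq_mul_succ_le (k : ℕ) : k.choose (k / 2) ^ 2 * (k + 1) ≤ 4 ^ k := by
  obtain ⟨m, rfl | rfl⟩ := Nat.even_or_odd' k
  · rw [show 2 * m / 2 = m by omega, ← Nat.centralBinom_eq_two_mul_choose, pow_mul]
    calc m.centralBinom ^ 2 * (2 * m + 1) ≤ m.centralBinom ^ 2 * (3 * m + 1) := by gcongr; omega
      _ ≤ 16 ^ m := centralBinom_sq_mul_le m
      _ = (4 ^ 2) ^ m := by norm_num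
  · have hdouble : (m + 1).centralBinom = 2 * (2 * m + 1).choose m := by
      rw [Nat.centralBinom_eq_two_mul_choose, show 2 * (m + 1) = 2 * m + 1 + 1 by ring,
        Nat.choose_succ_succ, ← Nat.choose_symm_half]
      ring
    have h := centralBinom_sq_mul_le (m + 1)
    rw [hdouble] at h
    rw [show (2 * m + 1) / 2 = m by omega]
    have : 4 * ((2 * m + 1).choose m ^ 2 * (2 * m + 1 + 1)) ≤ 4 * 4 ^ (2 * m + 1) := by
      calc _ ≤ (2 * (2 * m + 1).choose m) ^ 2 * (3 * (m + 1) + 1) := by ring_nf; omega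
        _ ≤ 16 ^ (m + 1) := h
        _ = _ := by rw [pow_succ, pow_succ, pow_mul]; ring
    omega

-- AM–GM form of `C(k,w) ≤ 2ᵏ/√(k+1)`: the right side is linear in `1/(k+1)`, which can be summed.
theorem two_mul_choose_mul_sqrt_le (k w N : ℕ) :
    2 * (k.choose w : ℝ) * √N ≤ 2 ^ k + N * 2 ^ k / (k + 1) := by
  have hsq : (k.choose w : ℝ) ^ 2 * (k + 1) ≤ 4 ^ k := by
    exact_mod_cast (Nat.mul_le_mul_right _ (Nat.pow_le_pow_left (Nat.choose_le_middle w k) 2)).trans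
      (choose_half_sq_mul_succ_le k)
  have hx : ((k.choose w : ℝ) * √N) ^ 2 ≤ 2 ^ k * (N * 2 ^ k / (k + 1)) := by
    rw [mul_pow, Real.sq_sqrt N.cast_nonneg, mul_div_assoc', le_div_iff₀ (by positivity)]
    calc (k.choose w : ℝ) ^ 2 * N * (k + 1) = (k.choose w : ℝ) ^ 2 * (k + 1) * N := by ring
      _ ≤ (4 : ℝ) ^ k * N := by gcongr
      _ = 2 ^ k * (N * 2 ^ k) := by rw [show (4 : ℝ) = 2 * 2 by norm_num, mul_pow]; ring
  have hA : (0 : ℝ) ≤ 2 ^ k := by positivity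
  have hB : (0 : ℝ) ≤ N * 2 ^ k / (k + 1) := by positivity
  have hc : 0 ≤ (k.choose w : ℝ) * √N := by positivity
  nlinarith [sq_nonneg ((2 : ℝ) ^ k - N * 2 ^ k / (k + 1))]

theorem choose_mul_pow_mul_choose_mul_sqrt_le {n j : ℕ} (hj : j ≤ n) (w a r : ℕ) :
    (n.choose j * r ^ j * a ^ (n - j) * (n - j).choose w : ℝ) * (4 * a * √(n + 1)) ≤
      2 * a * (n.choose j * r ^ j * (2 * a) ^ (n - j)) +
        (n + 1).choose j * r ^ j * (2 * a) ^ (n + 1 - j) := by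
  have hC : (n.choose j : ℝ) * ((n + 1) / ((n - j : ℕ) + 1)) = (n + 1).choose j := by
    rw [mul_div_assoc', div_eq_iff (by positivity)]
    exact_mod_cast (Nat.choose_mul_succ_eq n j).trans (by rw [Nat.sub_add_comm hj])
  have hamgm := two_mul_choose_mul_sqrt_le (n - j) w (n + 1)
  push_cast at hamgm
  rw [Nat.sub_add_comm hj, pow_succ]
  calc (n.choose j * r ^ j * a ^ (n - j) * (n - j).choose w : ℝ) * (4 * a * √(n + 1))
      = 2 * a * (n.choose j * r ^ j * a ^ (n - j)) * (2 * (n - j).choose w * √(n + 1)) := by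
        ring
    _ ≤ 2 * a * (n.choose j * r ^ j * a ^ (n - j)) *
          (2 ^ (n - j) + (n + 1) * 2 ^ (n - j) / ((n - j : ℕ) + 1)) := by
        gcongr
    _ = _ := by
        rw [mul_pow, ← hC]
        ring

theorem choose_mul_pow_mul_add_pow_mul_sqrt_le (n w a r : ℕ) :
    (n.choose w * a ^ w * (a + r) ^ (n - w) : ℝ) * (4 * a * √(n + 1)) ≤
      (4 * a + r) * (2 * a + r) ^ n := by
  have hcount : (n.choose w * a ^ w * (a + r) ^ (n - w) : ℝ) =
      ∑ j ∈ range (n + 1), (n.choose j * r ^ j * a ^ (n - j) * (n - j).choose w : ℝ) := by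
    exact_mod_cast choose_mul_pow_mul_add_pow_eq_sum n w a r
  have hbinom (m : ℕ) : ∑ j ∈ range (m + 1), (m.choose j * r ^ j * (2 * a) ^ (m - j) : ℝ) =
      (2 * a + r) ^ m := by
    rw [add_comm (2 * (a : ℝ)) r, add_pow]
    exact sum_congr rfl fun j _ => by ring
  rw [hcount, sum_mul]
  calc _ ≤ ∑ j ∈ range (n + 1), (2 * a * (n.choose j * r ^ j * (2 * a) ^ (n - j)) +
          (n + 1).choose j * r ^ j * (2 * a) ^ (n + 1 - j) : ℝ) :=
        sum_le_sum fun j hj =>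
          choose_mul_pow_mul_choose_mul_sqrt_le (Nat.lt_succ_iff.mp (mem_range.mp hj)) w a r
    _ ≤ 2 * a * (2 * a + r) ^ n + (2 * a + r) ^ (n + 1) := by
        rw [sum_add_distrib, ← mul_sum, hbinom, ← hbinom (n + 1), sum_range_succ _ (n + 1)]
        gcongr
        exact le_add_of_nonneg_right (by positivity)
    _ = _ := by ring

theorem card_filter_card_lt_half_mul_sqrt_le {q : ℕ} (hq : 2 ≤ q) (n w : ℕ) :
    (#{x : Fin n → Fin q | #{i | (x i : ℕ) < q / 2} = w} : ℝ) * √n ≤ 5 / 4 * q ^ n := by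
  set a := q / 2
  set r := q - 2 * a
  have hlow : #{b : Fin q | (b : ℕ) < a} = a := by
    rw [Fin.card_filter_val_lt]
    omega
  have hhigh : #{b : Fin q | ¬(b : ℕ) < a} = a + r := by
    have := card_filter_add_card_filter_not (s := univ) fun b : Fin q => (b : ℕ) < a
    rw [card_univ, Fintype.card_fin, hlow] at this
    omega
  have hq' : (2 * a + r : ℝ) = q := by exact_mod_cast (by omega : 2 * a + r = q)
  have hr : (4 * a + r : ℝ) ≤ 5 * a := by exact_mod_cast (by omega : 4 * a + r ≤ 5 * a)
  have ha : (0 : ℝ) < a := by exact_mod_cast (by omega : 0 < a)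
  rw [card_filter_card_filter_eq (ι := Fin n) (fun b : Fin q => (b : ℕ) < a), Fintype.card_fin,
    hlow, hhigh]
  refine le_of_mul_le_mul_right ?_ (by positivity : (0 : ℝ) < 4 * a)
  push_cast
  calc _ ≤ (n.choose w * a ^ w * (a + r) ^ (n - w) : ℝ) * (4 * a * √(n + 1)) := by
        rw [mul_assoc, mul_comm (√(n : ℝ))]
        gcongr
        linarith
    _ ≤ (4 * a + r) * q ^ n := hq' ▸ choose_mul_pow_mul_add_pow_mul_sqrt_le n w a r
    _ ≤ 5 * a * q ^ n := by gcongr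
    _ = _ := by ring

/-- There is an absolute constant `c₂ > 0` (independent of `t` and `q`) such that for all
positive integers `t` and `q ≥ 2`, for all sufficiently large `n`,
`tw(H(t,q,n)) ≤ pw(H(t,q,n)) ≤ c₂·t·qⁿ/√n`. -/
theorem treewidth_le_pathwidth_genHamming_upper :
    ∃ c₂ : ℝ, 0 < c₂ ∧
      ∀ t q : ℕ, 1 ≤ t → 2 ≤ q → ∃ N : ℕ, ∀ n : ℕ, N ≤ n →
        treewidth (genHamming t q n) ≤ pathwidth (genHamming t q n) ∧
        (pathwidth (genHamming t q n) : ℝ) ≤ c₂ * (t : ℝ) * (q : ℝ) ^ n / Real.sqrt n := by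
  refine ⟨5 / 2, by norm_num, fun t q ht hq => ⟨1, fun n hn => ⟨?_, ?_⟩⟩⟩
  · have : Nonempty (Fin q) := ⟨⟨0, by omega⟩⟩
    exact treewidth_le_pathwidth
  have hsqrt : (0 : ℝ) < √n := Real.sqrt_pos.mpr (by exact_mod_cast hn)
  have hadj : ∀ x y, (genHamming t q n).Adj x y →
      #{i | (x i : ℕ) < q / 2} ≤ #{i | (y i : ℕ) < q / 2} + t := fun x y hxy =>
    (card_filter_le_card_filter_add_hammingDist (fun b : Fin q => (b : ℕ) < q / 2) x y).trans
      (Nat.add_le_add_left hxy.2 _)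
  have hlevel : ∀ w, (#{x : Fin n → Fin q | #{i | (x i : ℕ) < q / 2} = w} : ℝ) ≤
      5 / 4 * q ^ n / √n := fun w =>
    (le_div_iff₀ hsqrt).mpr (card_filter_card_lt_half_mul_sqrt_le hq n w)
  calc (pathwidth (genHamming t q n) : ℝ) ≤ (t + 1) * (5 / 4 * q ^ n / √n) :=
        pathwidth_le_mul_of_adj_le _ t hadj _ hlevel
    _ ≤ 2 * t * (5 / 4 * q ^ n / √n) := by
        gcongr
        have : (1 : ℝ) ≤ t := by exact_mod_cast ht
        linarith
    _ = 5 / 2 * t * q ^ n / √n := by ring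
end

section
/- For every positive integer k, the Johnson graph J(2k+1,k) is k(k+1)-regular and its treewidth satisfies tw(J(2k+1,k)) ≥ k(k+1). -/
/-- The Johnson graph `J(n,k)`: vertices are the `k`-subsets of `{1,…,n}`, two distinct
subsets adjacent iff their intersection has exactly `k−1` elements. -/
def johnson (n k : ℕ) : SimpleGraph {A : Finset (Fin n) // A.card = k} where
  Adj A B := A ≠ B ∧ (A.1 ∩ B.1).card = k - 1
  symm := by
    constructor
    rintro A B ⟨h1, h2⟩
    exact ⟨h1.symm, by rwa [Finset.inter_comm]⟩
  loopless := by constructor; rintro A ⟨h, -⟩; exact h rfl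

instance (n k : ℕ) : DecidableRel (johnson n k).Adj := fun A B =>
  inferInstanceAs (Decidable (A ≠ B ∧ (A.1 ∩ B.1).card = k - 1))

namespace Finset

variable {α : Type*} [DecidableEq α] {A C D : Finset α}

lemma sdiff_sdiff_union_of_subset_of_disjoint (hC : C ⊆ A) (hD : Disjoint D A) :
    A \ (A \ C ∪ D) = C := by
  ext x
  grind [disjoint_left]

lemma sdiff_union_sdiff_of_disjoint (hD : Disjoint D A) : (A \ C ∪ D) \ A = D := by
  ext x
  grind [disjoint_left]

lemma sdiff_sdiff_union_sdiff (A B : Finset α) : A \ (A \ B) ∪ B \ A = B := by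
  ext x
  grind

end Finset

namespace SimpleGraph

variable {ι : Type*} {H : SimpleGraph ι}

def induceInduceIso (s t : Set ι) :
    (H.induce s).induce {x : s | ↑x ∈ t} ≃g H.induce (s ∩ t) where
  toEquiv := Equiv.subtypeSubtypeEquivSubtypeInter (· ∈ s) (· ∈ t)
  map_rel_iff' := Iff.rfl

lemma Preconnected.induce_inter_compl_singleton {s : Set ι} (hs : (H.induce s).Preconnected)
    {l : ι} (hl : (H.neighborSet l).Subsingleton) : (H.induce (s ∩ {l}ᶜ)).Preconnected := by
  refine (induceInduceIso s {l}ᶜ).preconnected_iff.mp (hs.induce_of_degree_eq_one ?_)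
  rintro x hx y hy z hz
  have hxl : x.1 = l := by simpa using hx
  exact Subtype.ext (hl (hxl ▸ hy : H.Adj l y) (hxl ▸ hz : H.Adj l z))

lemma Preconnected.subset_singleton_of_forall_adj_notMem {s : Set ι}
    (hs : (H.induce s).Preconnected) {l : ι} (hl : l ∈ s) (hnb : ∀ c, H.Adj l c → c ∉ s) :
    s ⊆ {l} := by
  intro j hj
  obtain ⟨w⟩ := hs ⟨l, hl⟩ ⟨j, hj⟩
  cases w with
  | nil => rfl
  | cons h _ => exact absurd (Subtype.property _) (hnb _ h)

end SimpleGraph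

open SimpleGraph

namespace TreeDecomp

variable {V : Type*} {ι : Type} {G : SimpleGraph V} {T : SimpleGraph ι}

def singleBag [Fintype V] (G : SimpleGraph V) : TreeDecomp G (⊥ : SimpleGraph Unit) where
  bag _ := Finset.univ
  cover v := ⟨(), Finset.mem_univ v⟩
  edgeCover u v _ := ⟨(), Finset.mem_univ u, Finset.mem_univ v⟩
  subtree v := @Connected.mk _ _ .of_subsingleton ⟨⟨(), Finset.mem_univ v⟩⟩

lemma exists_bag_superset_of_ne (D : TreeDecomp G T) {l p : ι} (hpl : p ≠ l)
    (hbag : D.bag l ⊆ D.bag p) (i : ι) : ∃ j : ({l}ᶜ : Set ι), D.bag i ⊆ D.bag j := by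
  by_cases hil : i = l
  · exact ⟨⟨p, hpl⟩, hil ▸ hbag⟩
  · exact ⟨⟨i, hil⟩, subset_rfl⟩

def deleteLeaf (D : TreeDecomp G T) {l p : ι} (hlp : T.Adj l p)
    (hleaf : (T.neighborSet l).Subsingleton) (hbag : D.bag l ⊆ D.bag p) :
    TreeDecomp G (T.induce {l}ᶜ) where
  bag i := D.bag i
  cover v := by
    obtain ⟨i, hi⟩ := D.cover v
    obtain ⟨j, hj⟩ := D.exists_bag_superset_of_ne hlp.ne' hbag i
    exact ⟨j, hj hi⟩
  edgeCover u v huv := by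
    obtain ⟨i, hu, hv⟩ := D.edgeCover u v huv
    obtain ⟨j, hj⟩ := D.exists_bag_superset_of_ne hlp.ne' hbag i
    exact ⟨j, hj hu, hj hv⟩
  subtree v := by
    obtain ⟨i, hi⟩ := D.cover v
    obtain ⟨j, hj⟩ := D.exists_bag_superset_of_ne hlp.ne' hbag i
    have : Nonempty ({l}ᶜ ∩ {i : ι | v ∈ D.bag i} : Set ι) := ⟨⟨j, j.2, hj hi⟩⟩
    refine (induceInduceIso _ {i | v ∈ D.bag i}).connected_iff.mpr ⟨?_⟩
    rw [Set.inter_comm]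
    exact (D.subtree v).preconnected.induce_inter_compl_singleton hleaf

theorem exists_bag_forall_adj_mem [Nonempty V] [Finite ι] (hT : T.IsTree) (D : TreeDecomp G T) :
    ∃ v i, v ∈ D.bag i ∧ ∀ u, G.Adj v u → u ∈ D.bag i := by
  induction hn : Nat.card ι using Nat.strong_induction_on generalizing ι with
  | _ n ih =>
  rcases subsingleton_or_nontrivial ι with hι | hι
  · obtain ⟨i, hi⟩ := D.cover (Classical.arbitrary V)
    refine ⟨_, i, hi, fun u hvu => ?_⟩
    obtain ⟨j, -, hj⟩ := D.edgeCover _ u hvu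
    rwa [Subsingleton.elim i j]
  classical
  have := Fintype.ofFinite ι
  obtain ⟨l, hl⟩ := hT.exists_vert_degree_one_of_nontrivial
  obtain ⟨p, hlp, hp⟩ := degree_eq_one_iff_existsUnique_adj.mp hl
  have hleaf : (T.neighborSet l).Subsingleton := fun a ha b hb => (hp a ha).trans (hp b hb).symm
  by_cases hbag : D.bag l ⊆ D.bag p
  · have hT' : (T.induce {l}ᶜ).IsTree :=
      ⟨hT.connected.induce_compl_singleton_of_degree_eq_one hl, hT.isAcyclic.induce _⟩
    have hcard : Nat.card ({l}ᶜ : Set ι) < n := hn ▸ Finite.card_subtype_lt (x := l) (by simp)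
    obtain ⟨v, i, hvi, hnb⟩ := ih _ hcard hT' (D.deleteLeaf hlp hleaf hbag) rfl
    exact ⟨v, i, hvi, hnb⟩
  obtain ⟨v, hvl, hvp⟩ := Finset.not_subset.mp hbag
  have honly : {i | v ∈ D.bag i} ⊆ {l} :=
    (D.subtree v).preconnected.subset_singleton_of_forall_adj_notMem hvl
      fun c hc => (hp c hc).symm ▸ hvp
  refine ⟨v, l, hvl, fun u hvu => ?_⟩
  obtain ⟨j, hvj, huj⟩ := D.edgeCover v u hvu
  rwa [← honly hvj]

end TreeDecomp

theorem minDegree_le_treewidth {V : Type*} [Fintype V] (G : SimpleGraph V) [DecidableRel G.Adj] :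
    G.minDegree ≤ treewidth G := by
  refine le_csInf ⟨_, Unit, inferInstance, ⊥, .of_subsingleton, TreeDecomp.singleBag G, rfl⟩ ?_
  rintro w ⟨ι, _, T, hT, D, rfl⟩
  classical
  rcases isEmpty_or_nonempty V with hV | hV
  · simp [minDegree_of_subsingleton]
  obtain ⟨v, i, hvi, hnb⟩ := D.exists_bag_forall_adj_mem hT
  have hsub : insert v (G.neighborFinset v) ⊆ D.bag i :=
    Finset.insert_subset hvi fun u hu => hnb u ((mem_neighborFinset _ _ _).mp hu)
  have : G.minDegree + 1 ≤ Finset.univ.sup fun i => (D.bag i).card :=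
    calc G.minDegree + 1 ≤ G.degree v + 1 := by grw [minDegree_le_degree]
      _ = (insert v (G.neighborFinset v)).card := by
        rw [Finset.card_insert_of_notMem (by simp), card_neighborFinset_eq_degree]
      _ ≤ (D.bag i).card := Finset.card_le_card hsub
      _ ≤ _ := Finset.le_sup (f := fun i => (D.bag i).card) (Finset.mem_univ i)
  omega

lemma johnson_adj_iff {n k : ℕ} {A B : {A : Finset (Fin n) // A.card = k}} :
    (johnson n k).Adj A B ↔ (A.1 \ B.1).card = 1 := by
  have hA := Finset.card_sdiff_add_card_inter A.1 B.1
  rw [A.2] at hA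
  constructor
  · rintro ⟨hne, hint⟩
    rcases Nat.eq_zero_or_pos k with rfl | hk
    · exact absurd (Subtype.ext (by rw [Finset.card_eq_zero.mp A.2, Finset.card_eq_zero.mp B.2]))
        hne
    · omega
  · intro h
    exact ⟨fun hAB => by simp [hAB] at h, by omega⟩

theorem johnson_isRegularOfDegree (n k : ℕ) : (johnson n k).IsRegularOfDegree (k * (n - k)) := by
  intro A
  have hmem {CD : Finset (Fin n) × Finset (Fin n)} :
      CD ∈ A.1.powersetCard 1 ×ˢ A.1ᶜ.powersetCard 1 ↔
        (CD.1 ⊆ A.1 ∧ CD.1.card = 1) ∧ (Disjoint CD.2 A.1 ∧ CD.2.card = 1) := by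
    simp only [Finset.mem_product, Finset.mem_powersetCard, Finset.subset_compl_iff_disjoint_right]
  rw [← card_neighborFinset_eq_degree]
  calc ((johnson n k).neighborFinset A).card
      = (A.1.powersetCard 1 ×ˢ A.1ᶜ.powersetCard 1).card := by
        refine Finset.card_bij' (fun B _ => (A.1 \ B.1, B.1 \ A.1))
          (fun CD hCD => ⟨A.1 \ CD.1 ∪ CD.2, ?_⟩) ?_ ?_ ?_ ?_
        · obtain ⟨⟨hC, hC1⟩, hD, hD1⟩ := hmem.mp hCD
          have hk : 1 ≤ k := by simpa [hC1, A.2] using Finset.card_le_card hC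
          rw [Finset.card_union_of_disjoint (hD.symm.mono_left Finset.sdiff_subset),
            Finset.card_sdiff_of_subset hC, A.2, hC1, hD1]
          omega
        · intro B hB
          rw [mem_neighborFinset] at hB
          exact hmem.mpr ⟨⟨Finset.sdiff_subset, johnson_adj_iff.mp hB⟩,
            Finset.sdiff_disjoint, johnson_adj_iff.mp hB.symm⟩
        · intro CD hCD
          obtain ⟨⟨hC, hC1⟩, hD, -⟩ := hmem.mp hCD
          rw [mem_neighborFinset, johnson_adj_iff]
          rwa [Finset.sdiff_sdiff_union_of_subset_of_disjoint hC hD]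
        · exact fun B _ => Subtype.ext (Finset.sdiff_sdiff_union_sdiff A.1 B.1)
        · intro CD hCD
          obtain ⟨⟨hC, -⟩, hD, -⟩ := hmem.mp hCD
          exact Prod.ext (Finset.sdiff_sdiff_union_of_subset_of_disjoint hC hD)
            (Finset.sdiff_union_sdiff_of_disjoint hD)
    _ = k * (n - k) := by simp [Finset.card_product, Finset.card_compl, A.2]

lemma johnson_nonempty {n k : ℕ} (hkn : k ≤ n) : Nonempty {A : Finset (Fin n) // A.card = k} :=
  let ⟨A, _, hA⟩ := Finset.exists_subset_card_eq (s := Finset.univ) (by simpa using hkn)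
  ⟨⟨A, hA⟩⟩

theorem johnson_regular_and_treewidth_lower_general (k : ℕ) :
    (johnson (2 * k + 1) k).IsRegularOfDegree (k * (k + 1)) ∧
    k * (k + 1) ≤ treewidth (johnson (2 * k + 1) k) := by
  have hreg : (johnson (2 * k + 1) k).IsRegularOfDegree (k * (k + 1)) := by
    simpa [show 2 * k + 1 - k = k + 1 by omega] using johnson_isRegularOfDegree (2 * k + 1) k
  have := johnson_nonempty (show k ≤ 2 * k + 1 by omega)
  exact ⟨hreg, hreg.minDegree_eq ▸ minDegree_le_treewidth _⟩

/-- For every positive integer `k`, the Johnson graph `J(2k+1,k)` is `k(k+1)`-regular and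
its treewidth is at least `k(k+1)`. -/
theorem johnson_regular_and_treewidth_lower (k : ℕ) (hk : 1 ≤ k) :
    (johnson (2 * k + 1) k).IsRegularOfDegree (k * (k + 1)) ∧
    k * (k + 1) ≤ treewidth (johnson (2 * k + 1) k) :=
  johnson_regular_and_treewidth_lower_general k
end

section
/- Let t and n be positive integers and let q ≥ 2 be an even integer. Then pw(H(t,q,n)) ≤ ( pw(H(t,2,n)) + 1 )·(q/2)ⁿ − 1. -/
open Finset

namespace PathDecomp

variable {V W : Type*} {G : SimpleGraph V} {H : SimpleGraph W} {m : ℕ}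

def maxBagCard (D : PathDecomp G m) : ℕ :=
  univ.sup fun i => #(D.bag i)

theorem pathwidth_le_maxBagCard_sub_one [Fintype V] (D : PathDecomp G m) :
    pathwidth G ≤ D.maxBagCard - 1 :=
  Nat.sInf_le ⟨m, D, rfl⟩

def univBag [Fintype V] (G : SimpleGraph V) : PathDecomp G 1 where
  bag _ := univ
  cover v := ⟨0, mem_univ v⟩
  edgeCover u v _ := ⟨0, mem_univ u, mem_univ v⟩
  interval v _ _ _ _ _ _ _ := mem_univ v

theorem exists_maxBagCard_sub_one_eq_pathwidth [Fintype V] (G : SimpleGraph V) :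
    ∃ (m : ℕ) (D : PathDecomp G m), D.maxBagCard - 1 = pathwidth G :=
  Nat.sInf_mem (s := {w | ∃ (m : ℕ) (D : PathDecomp G m), D.maxBagCard - 1 = w})
    ⟨_, 1, univBag G, rfl⟩

def comap [Fintype V] [DecidableEq W] (φ : V → W)
    (hφ : ∀ u v, G.Adj u v → φ u = φ v ∨ H.Adj (φ u) (φ v)) (D : PathDecomp H m) :
    PathDecomp G m where
  bag i := {v | φ v ∈ D.bag i}
  cover v := by
    obtain ⟨i, hi⟩ := D.cover (φ v)
    exact ⟨i, by simpa using hi⟩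
  edgeCover u v huv := by
    rcases hφ u v huv with heq | hadj
    · obtain ⟨i, hi⟩ := D.cover (φ u)
      exact ⟨i, by simpa using hi, by simpa [← heq] using hi⟩
    · obtain ⟨i, hu, hv⟩ := D.edgeCover _ _ hadj
      exact ⟨i, by simpa using hu, by simpa using hv⟩
  interval v i j k hij hjk hi hk := by
    simp only [mem_filter, mem_univ, true_and] at hi hk ⊢
    exact D.interval (φ v) i j k hij hjk hi hk

end PathDecomp

theorem card_filter_fst_equiv_mem {V W γ : Type*} [Fintype V] [Fintype γ] [DecidableEq W]
    (E : V ≃ W × γ) (S : Finset W) :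
    #{v | (E v).1 ∈ S} = #S * Fintype.card γ := by
  rw [← card_univ, ← card_product, ← card_map E.symm.toEmbedding]
  congr 1
  ext v
  simp

theorem pathwidth_le_of_equiv_prod {V W γ : Type*} [Fintype V] [Fintype W] [Fintype γ]
    {G : SimpleGraph V} {H : SimpleGraph W} (E : V ≃ W × γ)
    (hE : ∀ u v, G.Adj u v → (E u).1 = (E v).1 ∨ H.Adj (E u).1 (E v).1) :
    pathwidth G ≤ (pathwidth H + 1) * Fintype.card γ - 1 := by
  classical
  obtain ⟨m, D, hD⟩ := PathDecomp.exists_maxBagCard_sub_one_eq_pathwidth H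
  refine ((D.comap _ hE).pathwidth_le_maxBagCard_sub_one).trans (Nat.sub_le_sub_right ?_ 1)
  refine Finset.sup_le fun i _ => ?_
  calc #((D.comap _ hE).bag i) = #(D.bag i) * Fintype.card γ := card_filter_fst_equiv_mem E _
    _ ≤ (pathwidth H + 1) * Fintype.card γ := by
      gcongr
      have := Finset.le_sup (f := fun i => #(D.bag i)) (mem_univ i)
      unfold PathDecomp.maxBagCard at hD
      omega

theorem genHamming_adj_comp_or_eq {t q r n : ℕ} (f : Fin q → Fin r) {x y : Fin n → Fin q}
    (h : (genHamming t q n).Adj x y) :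
    f ∘ x = f ∘ y ∨ (genHamming t r n).Adj (f ∘ x) (f ∘ y) :=
  or_iff_not_imp_left.mpr fun hne =>
    ⟨hne, (hammingDist_comp_le_hammingDist fun _ => f).trans h.2⟩

theorem pathwidth_genHamming_le_of_even_general (t n q : ℕ) (hqe : Even q) :
    pathwidth (genHamming t q n) ≤ (pathwidth (genHamming t 2 n) + 1) * (q / 2) ^ n - 1 := by
  let e : Fin q ≃ Fin 2 × Fin (q / 2) :=
    (finCongr (Nat.two_mul_div_two_of_even hqe).symm).trans finProdFinEquiv.symm
  let E : (Fin n → Fin q) ≃ (Fin n → Fin 2) × (Fin n → Fin (q / 2)) :=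
    (Equiv.arrowCongr (Equiv.refl _) e).trans (Equiv.arrowProdEquivProdArrow _ _ _)
  simpa [Fintype.card_fun] using pathwidth_le_of_equiv_prod E
    fun _ _ h => genHamming_adj_comp_or_eq (Prod.fst ∘ e) h

/-- For positive integers `t, n` and an even integer `q ≥ 2`,
`pw(H(t,q,n)) ≤ (pw(H(t,2,n)) + 1)·(q/2)ⁿ − 1`. -/
theorem pathwidth_genHamming_le_of_even (t n q : ℕ) (ht : 1 ≤ t) (hn : 1 ≤ n)
    (hq : 2 ≤ q) (hqe : Even q) :
    pathwidth (genHamming t q n) ≤ (pathwidth (genHamming t 2 n) + 1) * (q / 2) ^ n - 1 :=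
  pathwidth_genHamming_le_of_even_general t n q hqe
end
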